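/- arXiv:2212.08648 — 6 statements merged into one kernel-verified Lean document; each statement's English description precedes it below -/
import Mathlib

section
/- For k ≥ 0 and n ≥ 1, the complex vector space of matrices f : (Fin k → Fin n) × (Fin k → Fin n) → ℂ satisfying f(σ ∘ I, σ ∘ J) = f(I, J) for all σ ∈ S_n — i.e. the space End_{S_n}(M_n^{⊗k}) of S_n-equivariant linear endomorphisms of M_n^{⊗k} written in the standard basis — has dimension equal to Bell(2k, n), the number of set partitions of a 2k-element set into at most n blocks. -/
noncomputable section

/-- `Bell m n`: the number of set partitions of `Fin m` (encoded as setoids,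
i.e. equivalence relations) into at most `n` blocks. -/
def Bell (m n : ℕ) : ℕ :=
  Nat.card {π : Setoid (Fin m) // Nat.card (Quotient π) ≤ n}

/-- The space `End_{S_n}(M_n^{⊗k})` in the standard basis: matrices
`f : (Fin k → Fin n) × (Fin k → Fin n) → ℂ` with `f (σ ∘ I, σ ∘ J) = f (I, J)`
for all `σ ∈ S_n`. -/
def MEnd (n k : ℕ) : Submodule ℂ ((Fin k → Fin n) × (Fin k → Fin n) → ℂ) where
  carrier := {f | ∀ (σ : Equiv.Perm (Fin n)) (I J : Fin k → Fin n),
    f (⇑σ ∘ I, ⇑σ ∘ J) = f (I, J)}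
  add_mem' := by
    intro a b ha hb σ I J
    simp only [Pi.add_apply, ha σ I J, hb σ I J]
  zero_mem' := by intro σ I J; rfl
  smul_mem' := by
    intro c a ha σ I J
    simp only [Pi.smul_apply, ha σ I J]

/-! An invariant matrix is a function on the set of `S_n`-orbits of pairs `(I, J)`, so the
dimension is the number of these orbits. Concatenating `I` and `J` turns a pair into a map
`Fin (2k) → Fin n`, and two such maps lie in one orbit exactly when they have the same kernel
partition, since a bijection between their images extends to a permutation of `Fin n`. The kernel
partitions that occur are exactly those with at most `n` blocks. -/

namespace Setoid

variable {α β : Type*}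

theorem card_quotient_ker_le [Finite β] (a : α → β) :
    Nat.card (Quotient (ker a)) ≤ Nat.card β :=
  (Nat.card_congr (quotientKerEquivRange a)).trans_le (Finite.card_subtype_le _)

theorem exists_ker_eq_of_card_le [Finite α] [Finite β] {π : Setoid α}
    (h : Nat.card (Quotient π) ≤ Nat.card β) : ∃ a : α → β, ker a = π := by
  have := Fintype.ofFinite (Quotient π)
  have := Fintype.ofFinite β
  rw [Nat.card_eq_fintype_card, Nat.card_eq_fintype_card] at h
  obtain ⟨g⟩ := Function.Embedding.nonempty_of_card_le h
  exact ⟨g ∘ Quotient.mk π, by ext x y; simp [ker_def, g.injective.eq_iff, Quotient.eq]⟩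

theorem ker_eq_ker_iff_exists_perm [Finite β] {a b : α → β} :
    ker a = ker b ↔ ∃ σ : Equiv.Perm β, ⇑σ ∘ a = b := by
  classical
  constructor
  · intro h
    let e : Set.range a ≃ Set.range b :=
      (quotientKerEquivRange a).symm.trans
        ((Quotient.congrRight fun x y => by rw [h]).trans (quotientKerEquivRange b))
    refine ⟨e.extendSubtype, funext fun x => ?_⟩
    have hx : (quotientKerEquivRange a).symm ⟨a x, x, rfl⟩ = Quotient.mk _ x :=
      (Equiv.symm_apply_eq _).2 rfl
    rw [Function.comp_apply, e.extendSubtype_apply_of_mem _ ⟨x, rfl⟩]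
    simp only [e, Equiv.trans_apply, hx]
    rfl
  · rintro ⟨σ, rfl⟩
    ext x y
    simp [ker_def, σ.injective.eq_iff]

end Setoid

namespace MulAction

variable {G X Y : Type*} [Group G] [MulAction G X] [MulAction G Y]

def orbitRelQuotientCongr (e : X ≃ Y) (he : ∀ (g : G) x, e (g • x) = g • e x) :
    orbitRel.Quotient G X ≃ orbitRel.Quotient G Y :=
  Quotient.congr e fun x y => by
    simp only [orbitRel_apply, mem_orbit_iff, ← he, e.apply_eq_iff_eq]

theorem mem_range_funLeft_orbitRel_iff {R M : Type*} [Semiring R] [AddCommMonoid M]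
    [Module R M] {f : X → M} :
    f ∈ LinearMap.range (LinearMap.funLeft R M (Quotient.mk (orbitRel G X))) ↔
      ∀ (g : G) x, f (g • x) = f x := by
  constructor
  · rintro ⟨f, rfl⟩ g x
    exact congrArg f (Quotient.sound (mem_orbit x g))
  · intro hf
    refine ⟨Quotient.lift f ?_, rfl⟩
    rintro x y ⟨g, rfl⟩
    exact hf g y

theorem finrank_range_funLeft_orbitRel (R : Type*) [Ring R] [StrongRankCondition R] [Finite X] :
    Module.finrank R (LinearMap.range (LinearMap.funLeft R R (Quotient.mk (orbitRel G X)))) =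
      Nat.card (orbitRel.Quotient G X) := by
  have := Fintype.ofFinite (orbitRel.Quotient G X)
  rw [LinearMap.finrank_range_of_inj (LinearMap.funLeft_injective_of_surjective _ _ _
    Quotient.mk_surjective), Module.finrank_pi, Nat.card_eq_fintype_card]

variable {α β : Type*}

def orbitRelQuotientPermArrowEquiv [Finite α] [Finite β] :
    orbitRel.Quotient (Equiv.Perm β) (α → β) ≃
      {π : Setoid α // Nat.card (Quotient π) ≤ Nat.card β} :=
  (Quotient.congrRight fun a b => by
      rw [orbitRel_apply, mem_orbit_iff, Setoid.ker_def, Subtype.mk.injEq, eq_comm,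
        Setoid.ker_eq_ker_iff_exists_perm]
      rfl).trans
    (Setoid.quotientKerEquivOfSurjective
      (fun a : α → β => ⟨Setoid.ker a, Setoid.card_quotient_ker_le a⟩)
      fun π => (Setoid.exists_ker_eq_of_card_le (β := β) π.2).imp fun _ ha => Subtype.ext ha)

end MulAction

namespace Equiv

def prodArrowEquivFinTwoMulArrow (k : ℕ) (β : Type*) :
    (Fin k → β) × (Fin k → β) ≃ (Fin (2 * k) → β) :=
  (sumArrowEquivProdArrow _ _ _).symm.trans
    (arrowCongr (finSumFinEquiv.trans (finCongr (two_mul k).symm)) (Equiv.refl β))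

theorem prodArrowEquivFinTwoMulArrow_smul {G β : Type*} [SMul G β] (k : ℕ) (g : G)
    (p : (Fin k → β) × (Fin k → β)) :
    prodArrowEquivFinTwoMulArrow k β (g • p) = g • prodArrowEquivFinTwoMulArrow k β p := by
  funext x
  change Sum.elim (g • p.1) (g • p.2) _ = g • Sum.elim p.1 p.2 _
  cases (finSumFinEquiv.trans (finCongr (two_mul k).symm)).symm x <;> rfl

end Equiv

theorem MEnd_eq_range_funLeft (n k : ℕ) :
    MEnd n k = LinearMap.range (LinearMap.funLeft ℂ ℂ (Quotient.mk
      (MulAction.orbitRel (Equiv.Perm (Fin n)) ((Fin k → Fin n) × (Fin k → Fin n))))) := by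
  ext f
  rw [MulAction.mem_range_funLeft_orbitRel_iff]
  exact ⟨fun hf σ p => hf σ p.1 p.2, fun hf σ I J => hf σ (I, J)⟩

theorem finrank_MEnd_eq_bell_general (k n : ℕ) :
    Module.finrank ℂ ↥(MEnd n k) = Bell (2 * k) n := by
  have orbits := (MulAction.orbitRelQuotientCongr (Equiv.prodArrowEquivFinTwoMulArrow k (Fin n))
    (Equiv.prodArrowEquivFinTwoMulArrow_smul k)).trans MulAction.orbitRelQuotientPermArrowEquiv
  rw [MEnd_eq_range_funLeft, MulAction.finrank_range_funLeft_orbitRel, Bell,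
    Nat.card_congr orbits, Nat.card_fin]

/-- `dim End_{S_n}(M_n^{⊗k}) = Bell(2k, n)`. -/
theorem finrank_MEnd_eq_bell (k n : ℕ) (hn : 1 ≤ n) :
    Module.finrank ℂ ↥(MEnd n k) = Bell (2 * k) n :=
  finrank_MEnd_eq_bell_general k n

end
end

section
/- Let l, k ≥ 0 and n ≥ 1. For each set partition π of Fin(l+k) into at most n blocks, define the matrix X_π : (Fin l → Fin n) × (Fin k → Fin n) → ℂ by X_π(I, J) = 1 if the kernel partition of the concatenated tuple (I, J) : Fin(l+k) → Fin n equals π, and 0 otherwise. Then {X_π : π a set partition of Fin(l+k) with at most n blocks} is a basis of the complex vector space of matrices f : (Fin l → Fin n) × (Fin k → Fin n) → ℂ satisfying f(σ ∘ I, σ ∘ J) = f(I, J) for all σ ∈ S_n; in particular this space, which is Hom_{S_n}(M_n^{⊗k}, M_n^{⊗l}) in the standard basis, has dimension Bell(l+k, n). -/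
/-!
An `S_n`-invariant matrix is a function of the pair `(I, J)` that is constant on `S_n`-orbits of
the concatenated tuple `Fin (l + k) → Fin n`. Two such tuples lie in the same orbit exactly when
they have the same kernel partition (extend the bijection between their images to a permutation
of `Fin n`), and every partition with at most `n` blocks is a kernel. Hence the invariant matrices
are precisely the pullbacks `g ∘ ker` of arbitrary functions `g` on these partitions, and the
pullbacks of the standard basis vectors are the matrices `X_π`.
-/

noncomputable section
open scoped Classical

/-- The space `Hom_{S_n}(M_n^{⊗k}, M_n^{⊗l})` in the standard basis: matrices
`f : (Fin l → Fin n) × (Fin k → Fin n) → ℂ` with `f (σ ∘ I, σ ∘ J) = f (I, J)`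
for all `σ ∈ S_n`. -/
def MHom (n l k : ℕ) : Submodule ℂ ((Fin l → Fin n) × (Fin k → Fin n) → ℂ) where
  carrier := {f | ∀ (σ : Equiv.Perm (Fin n)) (I : Fin l → Fin n) (J : Fin k → Fin n),
    f (⇑σ ∘ I, ⇑σ ∘ J) = f (I, J)}
  add_mem' := by
    intro a b ha hb σ I J
    simp only [Pi.add_apply, ha σ I J, hb σ I J]
  zero_mem' := by intro σ I J; rfl
  smul_mem' := by
    intro c a ha σ I J
    simp only [Pi.smul_apply, ha σ I J]

open Function

instance Setoid.finite {α : Type*} [Finite α] : Finite (Setoid α) :=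
  Finite.of_injective (fun r : Setoid α => ⇑r) fun _ _ => Setoid.eq_iff_rel_eq.2

theorem LinearMap.mem_range_funLeft_iff {R M α ι : Type*} [Semiring R] [AddCommMonoid M]
    [Module R M] {p : α → ι} {f : α → M} :
    f ∈ LinearMap.range (LinearMap.funLeft R M p) ↔ f.FactorsThrough p := by
  rw [factorsThrough_iff, LinearMap.mem_range]
  exact exists_congr fun g => eq_comm

section Kernel

variable {α β : Type*}

theorem Setoid.ker_perm_comp (σ : Equiv.Perm β) (f : α → β) : Setoid.ker (σ ∘ f) = Setoid.ker f :=
  Setoid.ext fun _ _ => σ.injective.eq_iff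

theorem Setoid.exists_perm_comp_eq_of_ker_eq [Finite α] {f g : α → β}
    (h : Setoid.ker f = Setoid.ker g) : ∃ σ : Equiv.Perm β, σ ∘ f = g := by
  have hfg (a b : α) : f a = f b ↔ g a = g b := by
    rw [← Setoid.ker_def, h, Setoid.ker_def]
  obtain ⟨σ, hσ⟩ := Equiv.Perm.exists_extending_pair (Setoid.kerLift f)
    (Quotient.lift g fun a b hab => (hfg a b).1 hab) (Setoid.kerLift_injective f)
    (by rintro ⟨a⟩ ⟨b⟩ hab; exact Quotient.sound ((hfg a b).2 hab))
  exact ⟨σ, funext fun a => hσ ⟦a⟧⟩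

theorem Setoid.card_quotient_ker_le_s4 [Finite β] (f : α → β) :
    Nat.card (Quotient (Setoid.ker f)) ≤ Nat.card β :=
  Nat.card_le_card_of_injective _ (Setoid.kerLift_injective f)

theorem Setoid.exists_ker_eq [Finite α] [Finite β] (π : Setoid α)
    (hπ : Nat.card (Quotient π) ≤ Nat.card β) : ∃ f : α → β, Setoid.ker f = π := by
  have := Fintype.ofFinite (Quotient π)
  have := Fintype.ofFinite β
  rw [Nat.card_eq_fintype_card, Nat.card_eq_fintype_card] at hπ
  obtain ⟨e⟩ := Function.Embedding.nonempty_of_card_le hπ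
  exact ⟨fun a => e ⟦a⟧, Setoid.ext fun a b => e.injective.eq_iff.trans Quotient.eq⟩

end Kernel

section KerPartition

variable {α : Type*} {n : ℕ}

def kerPartition (f : α → Fin n) : {π : Setoid α // Nat.card (Quotient π) ≤ n} :=
  ⟨Setoid.ker f, by simpa using Setoid.card_quotient_ker_le_s4 f⟩

theorem kerPartition_surjective [Finite α] :
    Surjective (kerPartition : (α → Fin n) → {π : Setoid α // Nat.card (Quotient π) ≤ n}) := by
  rintro ⟨π, hπ⟩
  obtain ⟨f, hf⟩ := Setoid.exists_ker_eq (β := Fin n) π (by simpa using hπ)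
  exact ⟨f, Subtype.ext hf⟩

theorem kerPartition_eq_iff [Finite α] {f g : α → Fin n} :
    kerPartition f = kerPartition g ↔ ∃ σ : Equiv.Perm (Fin n), σ ∘ f = g := by
  refine ⟨fun h => Setoid.exists_perm_comp_eq_of_ker_eq (congrArg Subtype.val h), ?_⟩
  rintro ⟨σ, rfl⟩
  exact Subtype.ext (Setoid.ker_perm_comp σ f).symm

end KerPartition

theorem Fin.append_perm_comp {l k n : ℕ} (σ : Equiv.Perm (Fin n)) (I : Fin l → Fin n)
    (J : Fin k → Fin n) : Fin.append (σ ∘ I) (σ ∘ J) = σ ∘ Fin.append I J := by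
  funext i
  refine Fin.addCases (fun i => ?_) (fun i => ?_) i <;> simp

theorem mem_MHom_iff_factorsThrough {l k n : ℕ} {f : (Fin l → Fin n) × (Fin k → Fin n) → ℂ} :
    f ∈ MHom n l k ↔ f.FactorsThrough (kerPartition ∘ Fin.appendEquiv l k) := by
  refine ⟨fun hf x y hxy => ?_, fun hf σ I J => hf ?_⟩
  · obtain ⟨σ, hσ⟩ := kerPartition_eq_iff.1 hxy
    have hy : (σ ∘ x.1, σ ∘ x.2) = y := (Fin.appendEquiv l k).injective <| by
      change Fin.append (σ ∘ x.1) (σ ∘ x.2) = Fin.append y.1 y.2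
      rw [Fin.append_perm_comp]
      exact hσ
    rw [← hy]
    exact (hf σ x.1 x.2).symm
  · exact (kerPartition_eq_iff.2 ⟨σ, (Fin.append_perm_comp σ I J).symm⟩).symm

theorem MHom_eq_range_funLeft (l k n : ℕ) :
    MHom n l k = LinearMap.range (LinearMap.funLeft ℂ ℂ (kerPartition ∘ Fin.appendEquiv l k)) :=
  SetLike.ext fun _ => mem_MHom_iff_factorsThrough.trans LinearMap.mem_range_funLeft_iff.symm

theorem MHom_basis_general (l k n : ℕ) :
    (∃ b : Module.Basis {π : Setoid (Fin (l + k)) // Nat.card (Quotient π) ≤ n} ℂ ↥(MHom n l k),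
      ∀ (π : {π : Setoid (Fin (l + k)) // Nat.card (Quotient π) ≤ n})
        (I : Fin l → Fin n) (J : Fin k → Fin n),
        (b π : (Fin l → Fin n) × (Fin k → Fin n) → ℂ) (I, J) =
          if Setoid.ker (Fin.append I J) = (π : Setoid (Fin (l + k))) then 1 else 0) ∧
    Module.finrank ℂ ↥(MHom n l k) = Bell (l + k) n := by
  have hinj : Injective
      (LinearMap.funLeft ℂ ℂ (kerPartition ∘ Fin.appendEquiv (α := Fin n) l k)) :=
    LinearMap.funLeft_injective_of_surjective _ _ _
      (kerPartition_surjective.comp (Fin.appendEquiv l k).surjective)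
  let e := (LinearEquiv.ofInjective _ hinj).trans
    (LinearEquiv.ofEq _ _ (MHom_eq_range_funLeft l k n).symm)
  let b := (Pi.basisFun ℂ _).map e
  refine ⟨⟨b, fun π I J => ?_⟩, Module.finrank_eq_nat_card_basis b⟩
  simp only [b, e, Module.Basis.map_apply, Pi.basisFun_apply, LinearEquiv.trans_apply,
    LinearEquiv.coe_ofEq_apply, LinearEquiv.ofInjective_apply, LinearMap.funLeft_apply, comp_apply,
    Pi.single_apply, kerPartition, Subtype.ext_iff]
  rfl

/-- the matrices `X_π`, for `π` a set partition of `Fin (l + k)` with at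
most `n` blocks, where `X_π (I, J) = 1` if the kernel partition of the concatenated
tuple `(I, J) : Fin (l + k) → Fin n` equals `π` and `0` otherwise, form a basis of
`Hom_{S_n}(M_n^{⊗k}, M_n^{⊗l})`; in particular that space has dimension
`Bell (l + k) n`. -/
theorem MHom_basis (l k n : ℕ) (hn : 1 ≤ n) :
    (∃ b : Module.Basis {π : Setoid (Fin (l + k)) // Nat.card (Quotient π) ≤ n} ℂ ↥(MHom n l k),
      ∀ (π : {π : Setoid (Fin (l + k)) // Nat.card (Quotient π) ≤ n})
        (I : Fin l → Fin n) (J : Fin k → Fin n),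
        (b π : (Fin l → Fin n) × (Fin k → Fin n) → ℂ) (I, J) =
          if Setoid.ker (Fin.append I J) = (π : Setoid (Fin (l + k))) then 1 else 0) ∧
    Module.finrank ℂ ↥(MHom n l k) = Bell (l + k) n :=
  MHom_basis_general l k n

end
end

section
/- Let l, k, p, q ≥ 0 and n ≥ 1 with p + q = l + k. Then the complex vector space of matrices f : (Fin l → Fin n) × (Fin k → Fin n) → ℂ satisfying f(σ ∘ I, σ ∘ J) = f(I, J) for all σ ∈ S_n is linearly isomorphic to the corresponding space of matrices g : (Fin q → Fin n) × (Fin p → Fin n) → ℂ satisfying g(σ ∘ I, σ ∘ J) = g(I, J) for all σ ∈ S_n; i.e. Hom_{S_n}(M_n^{⊗k}, M_n^{⊗l}) ≅ Hom_{S_n}(M_n^{⊗p}, M_n^{⊗q}) as vector spaces, and both have dimension Bell(l+k, n). -/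
noncomputable section

/-- The orbit setoid for the `S_n`-action on tuples `Fin m → Fin n`. -/
def orbS (m n : ℕ) : Setoid (Fin m → Fin n) where
  r I J := ∃ σ : Equiv.Perm (Fin n), ⇑σ ∘ I = J
  iseqv := by
    constructor
    · intro I; exact ⟨1, rfl⟩
    · rintro I J ⟨σ, rfl⟩; exact ⟨σ⁻¹, by ext x; simp⟩
    · rintro I J K ⟨σ, rfl⟩ ⟨τ, rfl⟩; exact ⟨τ * σ, by ext x; simp⟩

instance (m n : ℕ) : Finite (Quotient (orbS m n)) := Quotient.finite _

lemma ker_comp_perm {m n : ℕ} (σ : Equiv.Perm (Fin n)) (I : Fin m → Fin n) :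
    Setoid.ker (⇑σ ∘ I) = Setoid.ker I := by
  ext a b
  exact ⟨fun h => σ.injective h, fun h => congrArg σ h⟩

lemma card_quot_ker_le {m n : ℕ} (I : Fin m → Fin n) :
    Nat.card (Quotient (Setoid.ker I)) ≤ n := by
  rw [Nat.card_congr (Setoid.quotientKerEquivRange I)]
  have : Nat.card (Set.range I) ≤ Nat.card (Fin n) :=
    Nat.card_le_card_of_injective _ Subtype.val_injective
  simpa using this

open Classical in
lemma orb_card (m n : ℕ) : Nat.card (Quotient (orbS m n)) = Bell m n := by
  apply Nat.card_congr
  apply Equiv.ofBijective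
    (Quotient.lift (fun I => (⟨Setoid.ker I, card_quot_ker_le I⟩ :
        {π : Setoid (Fin m) // Nat.card (Quotient π) ≤ n}))
      (by rintro I J ⟨σ, rfl⟩; simp [ker_comp_perm]))
  constructor
  · rintro ⟨I⟩ ⟨J⟩ hIJ
    apply Quotient.sound
    have hk : Setoid.ker I = Setoid.ker J := congrArg Subtype.val hIJ
    let e : Set.range I ≃ Set.range J :=
      (Setoid.quotientKerEquivRange I).symm.trans
        ((Quotient.congrRight (fun a b => by rw [hk])).trans
          (Setoid.quotientKerEquivRange J))
    refine ⟨Equiv.extendSubtype (p := fun x => x ∈ Set.range I)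
      (q := fun x => x ∈ Set.range J) e, ?_⟩
    funext x
    have h1 : Equiv.extendSubtype e (I x) = e ⟨I x, Set.mem_range_self x⟩ :=
      Equiv.extendSubtype_apply_of_mem e (I x) (Set.mem_range_self x)
    have h2 : e ⟨I x, Set.mem_range_self x⟩ = ⟨J x, Set.mem_range_self x⟩ := by
      show ((Setoid.quotientKerEquivRange I).symm.trans
        ((Quotient.congrRight (fun a b => by rw [hk])).trans
          (Setoid.quotientKerEquivRange J))) ⟨I x, Set.mem_range_self x⟩ = _
      simp only [Equiv.trans_apply]
      have h3 : (Setoid.quotientKerEquivRange I).symm ⟨I x, Set.mem_range_self x⟩ =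
          Quotient.mk _ x := by
        apply (Setoid.quotientKerEquivRange I).injective
        simp only [Equiv.apply_symm_apply]
        rfl
      rw [h3]
      rfl
    simp only [Function.comp_apply, h1, h2]
  · rintro ⟨π, hπ⟩
    haveI : Fintype (Quotient π) := Fintype.ofFinite _
    obtain ⟨g⟩ : Nonempty (Quotient π ↪ Fin n) :=
      Function.Embedding.nonempty_iff_card_le.mpr (by
        simpa [Nat.card_eq_fintype_card] using hπ)
    refine ⟨⟦⇑g ∘ Quotient.mk π⟧, ?_⟩
    apply Subtype.ext
    show Setoid.ker (⇑g ∘ Quotient.mk π) = π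
    have : Setoid.ker (⇑g ∘ Quotient.mk π) = Setoid.ker (Quotient.mk π) := by
      ext a b
      exact ⟨fun hh => g.injective hh, fun hh => congrArg g hh⟩
    rw [this]
    exact Setoid.ker_mk_eq π

/-- Gluing a pair of tuples into one long tuple. -/
def pairEquiv (l k n : ℕ) : ((Fin l → Fin n) × (Fin k → Fin n)) ≃ (Fin (l+k) → Fin n) :=
  (Equiv.sumArrowEquivProdArrow _ _ _).symm.trans
    (Equiv.arrowCongr finSumFinEquiv (Equiv.refl _))

lemma pairEquiv_comp {l k n : ℕ} (σ : Equiv.Perm (Fin n)) (I : Fin l → Fin n)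
    (J : Fin k → Fin n) :
    pairEquiv l k n (⇑σ ∘ I, ⇑σ ∘ J) = ⇑σ ∘ pairEquiv l k n (I, J) := by
  funext x
  simp only [pairEquiv, Equiv.trans_apply, Equiv.sumArrowEquivProdArrow,
    Equiv.coe_fn_symm_mk, Equiv.arrowCongr_apply, Function.comp_apply, Equiv.refl_apply]
  rcases finSumFinEquiv.symm x with a | a <;> rfl

lemma pairEquiv_symm_comp {l k n : ℕ} (σ : Equiv.Perm (Fin n)) (K : Fin (l+k) → Fin n) :
    (pairEquiv l k n).symm (⇑σ ∘ K) =
      (⇑σ ∘ ((pairEquiv l k n).symm K).1, ⇑σ ∘ ((pairEquiv l k n).symm K).2) := by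
  apply (pairEquiv l k n).injective
  rw [Equiv.apply_symm_apply, pairEquiv_comp]
  simp

/-- The intertwiner space is isomorphic to functions on the orbit space. -/
def MHomEquiv (n l k : ℕ) : MHom n l k ≃ₗ[ℂ] (Quotient (orbS (l+k) n) → ℂ) where
  toFun f := Quotient.lift (fun K => f.1 ((pairEquiv l k n).symm K)) (by
    rintro K K' ⟨σ, rfl⟩
    simp only [pairEquiv_symm_comp]
    exact (f.2 σ _ _).symm)
  map_add' f g := by funext P; induction P using Quotient.ind; rfl
  map_smul' c f := by funext P; induction P using Quotient.ind; rfl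
  invFun g := ⟨fun P => g ⟦pairEquiv l k n P⟧, by
    intro σ I J
    simp only
    congr 1
    exact (Quotient.sound ⟨σ, (pairEquiv_comp σ I J).symm⟩ :
      (⟦pairEquiv l k n (I, J)⟧ : Quotient (orbS (l+k) n)) = ⟦pairEquiv l k n (⇑σ ∘ I, ⇑σ ∘ J)⟧).symm⟩
  left_inv f := by
    apply Subtype.ext
    funext P
    simp only [Quotient.lift_mk, Equiv.symm_apply_apply]
  right_inv g := by
    funext P
    induction P using Quotient.ind
    simp only [Quotient.lift_mk, Equiv.apply_symm_apply]

lemma MHom_finrank (n l k : ℕ) : Module.finrank ℂ ↥(MHom n l k) = Bell (l + k) n := by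
  haveI : Fintype (Quotient (orbS (l+k) n)) := Fintype.ofFinite _
  rw [(MHomEquiv n l k).finrank_eq, Module.finrank_pi, ← Nat.card_eq_fintype_card, orb_card]

/-- if `p + q = l + k` then
`Hom_{S_n}(M_n^{⊗k}, M_n^{⊗l}) ≅ Hom_{S_n}(M_n^{⊗p}, M_n^{⊗q})` as vector spaces,
and both have dimension `Bell (l + k) n`. -/
theorem MHom_equiv_of_sum_eq (l k p q n : ℕ) (hn : 1 ≤ n) (h : p + q = l + k) :
    Nonempty (↥(MHom n l k) ≃ₗ[ℂ] ↥(MHom n q p)) ∧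
    Module.finrank ℂ ↥(MHom n l k) = Bell (l + k) n ∧
    Module.finrank ℂ ↥(MHom n q p) = Bell (l + k) n := by
  have hqp : q + p = l + k := by omega
  have h1 := MHom_finrank n l k
  have h2 := MHom_finrank n q p
  rw [hqp] at h2
  exact ⟨FiniteDimensional.nonempty_linearEquiv_of_finrank_eq (h1.trans h2.symm), h1, h2⟩

end
end

section
/- Let n, m ≥ 1 and let π be a set partition of Fin m with exactly t blocks, where t ≤ n. Let M^π be the subspace of the space of functions (Fin m → Fin n) → ℂ spanned by the standard basis vectors e_I for those tuples I : Fin m → Fin n with ker(I) = π. Then M^π is stable under the S_n-action induced by post-composition on tuples, and M^π is isomorphic, as a representation of S_n, to the permutation representation of S_n on the free ℂ-module with basis the set of injective functions Fin t → Fin n (with σ ∈ S_n acting on an injection by post-composition). -/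
noncomputable section

/-- `MPart n m π`: the subspace of `(Fin m → Fin n) → ℂ` (identified with `M_n^{⊗m}`)
spanned by the standard basis vectors `e_I = Pi.single I 1` for those tuples
`I : Fin m → Fin n` whose kernel partition is `π`. -/
def MPart (n m : ℕ) (π : Setoid (Fin m)) : Submodule ℂ ((Fin m → Fin n) → ℂ) :=
  Submodule.span ℂ
    {f | ∃ I : Fin m → Fin n, Setoid.ker I = π ∧ f = Pi.single I (1 : ℂ)}

/-- The submodule of functions supported on tuples with kernel `π`. -/
def VPart (n m : ℕ) (π : Setoid (Fin m)) : Submodule ℂ ((Fin m → Fin n) → ℂ) where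
  carrier := {f | ∀ I : Fin m → Fin n, Setoid.ker I ≠ π → f I = 0}
  add_mem' := fun {a b} ha hb I hI => by simp [ha I hI, hb I hI]
  zero_mem' := fun I hI => rfl
  smul_mem' := fun c f hf I hI => by simp [hf I hI]

lemma mem_MPart_iff (n m : ℕ) (π : Setoid (Fin m)) (f : (Fin m → Fin n) → ℂ) :
    f ∈ MPart n m π ↔ ∀ I : Fin m → Fin n, Setoid.ker I ≠ π → f I = 0 := by
  constructor
  · intro hf
    have hle : MPart n m π ≤ VPart n m π := by
      apply Submodule.span_le.2
      rintro _ ⟨I, hI, rfl⟩ J hJ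
      have : J ≠ I := fun h => hJ (h ▸ hI)
      simp [Pi.single_apply, this]
    exact hle hf
  · intro hf
    have hsum : f = ∑ I : Fin m → Fin n, Pi.single I (f I) :=
      (Finset.univ_sum_single f).symm
    rw [hsum]
    apply Submodule.sum_mem
    intro I _
    by_cases h : Setoid.ker I = π
    · have : Pi.single I (f I) = (f I) • (Pi.single I (1 : ℂ) : (Fin m → Fin n) → ℂ) := by
        ext J; by_cases hJ : J = I <;> simp [Pi.single_apply, hJ]
      rw [this]
      exact Submodule.smul_mem _ _ (Submodule.subset_span ⟨I, h, rfl⟩)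
    · rw [hf I h]
      simp

/-- if `π` is a set partition of `Fin m` with exactly `t` blocks and
`t ≤ n`, then `M^π` is stable under the `S_n`-action induced by post-composition on
tuples, and is isomorphic, as a representation of `S_n`, to the permutation
representation on the free `ℂ`-module with basis the injective functions
`Fin t → Fin n` (with `σ` acting on injections by post-composition). -/
theorem MPart_iso_injections (n m t : ℕ) (hn : 1 ≤ n) (hm : 1 ≤ m)
    (π : Setoid (Fin m)) (ht : Nat.card (Quotient π) = t) (htn : t ≤ n) :
    ∃ stab : ∀ (σ : Equiv.Perm (Fin n)) (f : (Fin m → Fin n) → ℂ),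
        f ∈ MPart n m π → (fun I => f (⇑σ ∘ I)) ∈ MPart n m π,
      ∃ e : ↥(MPart n m π) ≃ₗ[ℂ] ({g : Fin t → Fin n // Function.Injective g} → ℂ),
        ∀ (σ : Equiv.Perm (Fin n)) (f : (Fin m → Fin n) → ℂ) (hf : f ∈ MPart n m π)
          (g : {g : Fin t → Fin n // Function.Injective g}),
          e ⟨fun I => f (⇑σ ∘ I), stab σ f hf⟩ g =
            e ⟨f, hf⟩ ⟨⇑σ ∘ g.1, (Equiv.injective σ).comp g.2⟩ := by
  classical
  -- kernel of a composition with an injection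
  have hker : ∀ (σ : Equiv.Perm (Fin n)) (I : Fin m → Fin n),
      Setoid.ker (⇑σ ∘ I) = Setoid.ker I := by
    intro σ I
    apply Setoid.ext
    intro i j
    exact ⟨fun h => σ.injective h, fun h => congrArg σ h⟩
  have stab : ∀ (σ : Equiv.Perm (Fin n)) (f : (Fin m → Fin n) → ℂ),
      f ∈ MPart n m π → (fun I => f (⇑σ ∘ I)) ∈ MPart n m π := by
    intro σ f hf
    rw [mem_MPart_iff] at hf ⊢
    intro I hI
    exact hf (⇑σ ∘ I) (fun h => hI ((hker σ I) ▸ h))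
  refine ⟨stab, ?_⟩
  -- the equivalence between `Fin t` and blocks of `π`
  let q : Fin t ≃ Quotient π := (Finite.equivFinOfCardEq ht).symm
  -- tuple associated to an injection
  let tup : {g : Fin t → Fin n // Function.Injective g} → (Fin m → Fin n) :=
    fun g i => g.1 (q.symm (Quotient.mk π i))
  have htup : ∀ g, Setoid.ker (tup g) = π := by
    intro g
    apply Setoid.ext
    intro i j
    constructor
    · intro h
      have h2 : q.symm (Quotient.mk π i) = q.symm (Quotient.mk π j) := g.2 h
      have h3 : Quotient.mk π i = Quotient.mk π j := q.symm.injective h2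
      exact Quotient.exact h3
    · intro h
      have : Quotient.mk π i = Quotient.mk π j := Quotient.sound h
      show g.1 (q.symm (Quotient.mk π i)) = g.1 (q.symm (Quotient.mk π j))
      rw [this]
  -- injection associated to a tuple with kernel π
  have injg : ∀ (I : Fin m → Fin n), Setoid.ker I = π →
      Function.Injective (fun k : Fin t => I (q k).out) := by
    intro I hI k k' h
    have : π.r (q k).out (q k').out := hI ▸ h
    have h2 : Quotient.mk π (q k).out = Quotient.mk π (q k').out := Quotient.sound this
    rw [Quotient.out_eq, Quotient.out_eq] at h2
    exact q.injective h2
  -- forward and backward linear maps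
  let F : ↥(MPart n m π) →ₗ[ℂ] ({g : Fin t → Fin n // Function.Injective g} → ℂ) :=
    { toFun := fun f g => f.1 (tup g)
      map_add' := fun a b => rfl
      map_smul' := fun c a => rfl }
  let Gfun : ({g : Fin t → Fin n // Function.Injective g} → ℂ) → ((Fin m → Fin n) → ℂ) :=
    fun c I => if h : Setoid.ker I = π then c ⟨fun k => I (q k).out, injg I h⟩ else 0
  have hGmem : ∀ c, Gfun c ∈ MPart n m π := by
    intro c
    rw [mem_MPart_iff]
    intro I hI
    simp only [Gfun, dif_neg hI]
  let G : ({g : Fin t → Fin n // Function.Injective g} → ℂ) →ₗ[ℂ] ↥(MPart n m π) :=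
    { toFun := fun c => ⟨Gfun c, hGmem c⟩
      map_add' := fun a b => by
        apply Subtype.ext
        funext I
        simp only [Gfun]
        by_cases h : Setoid.ker I = π <;> simp [h]
      map_smul' := fun r a => by
        apply Subtype.ext
        funext I
        simp only [Gfun]
        by_cases h : Setoid.ker I = π <;> simp [h] }
  have hGF : ∀ f, G (F f) = f := by
    intro f
    apply Subtype.ext
    funext I
    simp only [G, F, Gfun, LinearMap.coe_mk, AddHom.coe_mk]
    by_cases h : Setoid.ker I = π
    · rw [dif_pos h]
      have hti : tup ⟨fun k => I (q k).out, injg I h⟩ = I := by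
        funext i
        show I (q (q.symm (Quotient.mk π i))).out = I i
        rw [q.apply_symm_apply]
        have hrel : π.r (Quotient.mk π i).out i :=
          Quotient.exact (Quotient.out_eq (Quotient.mk π i))
        have : (Setoid.ker I).r (Quotient.mk π i).out i := h.symm ▸ hrel
        exact this
      exact congrArg f.1 hti
    · rw [dif_neg h]
      exact ((mem_MPart_iff n m π f.1).1 f.2 I h).symm
  have hFG : ∀ c, F (G c) = c := by
    intro c
    funext g
    simp only [F, G, Gfun, LinearMap.coe_mk, AddHom.coe_mk]
    rw [dif_pos (htup g)]
    congr 1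
    apply Subtype.ext
    funext k
    show g.1 (q.symm (Quotient.mk π (q k).out)) = g.1 k
    rw [Quotient.out_eq, q.symm_apply_apply]
  refine ⟨LinearEquiv.ofLinear F G (LinearMap.ext fun c => hFG c)
      (LinearMap.ext fun f => hGF f), ?_⟩
  intro σ f hf g
  rfl

end
end

section
/- Let n, m ≥ 1. The space of functions (Fin m → Fin n) → ℂ, with the S_n-action induced by post-composition on tuples, is the internal direct sum, over all set partitions π of Fin m with at most n blocks, of the S_n-subrepresentations M^π spanned by the standard basis vectors e_I with ker(I) = π. Consequently, as a representation of S_n, M_n^{⊗m} is isomorphic to the direct sum over t = 1, …, n of S(m, t) copies of the permutation representation on injective functions Fin t → Fin n, where S(m, t) is the Stirling number of the second kind (the number of set partitions of Fin m into exactly t blocks). -/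
noncomputable section

/-- `Stirling m t`: the Stirling number of the second kind, i.e. the number of set
partitions of `Fin m` (encoded as setoids) into exactly `t` blocks. -/
def Stirling (m t : ℕ) : ℕ :=
  Nat.card {π : Setoid (Fin m) // Nat.card (Quotient π) = t}

namespace MPartAux

instance instFiniteSetoid (α : Type*) [Finite α] : Finite (Setoid α) :=
  Finite.of_injective (fun s : Setoid α => (fun a b => s a b : α → α → Prop))
    (fun _ _ h => Setoid.ext fun a b => iff_of_eq (congrFun (congrFun h a) b))

/-- The index type of the target representation. -/
abbrev T (n m : ℕ) := (t : Fin n) × (Fin (Stirling m (t.1 + 1)) ×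
    {g : Fin (t.1 + 1) → Fin n // Function.Injective g})

/-- A fixed enumeration of each quotient. -/
def qe (m : ℕ) (π : Setoid (Fin m)) : Quotient π ≃ Fin (Nat.card (Quotient π)) :=
  Finite.equivFin _

/-- A fixed enumeration of the partitions with exactly `t` blocks. -/
def enum (m t : ℕ) : {π : Setoid (Fin m) // Nat.card (Quotient π) = t} ≃ Fin (Stirling m t) :=
  Finite.equivFinOfCardEq rfl

/-- The map from the target index type to tuples. -/
def Psi (n m : ℕ) (x : T n m) : Fin m → Fin n :=
  x.2.2.1 ∘ finCongr ((enum m (x.1.1 + 1)).symm x.2.1).2 ∘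
    qe m ((enum m (x.1.1 + 1)).symm x.2.1).1 ∘ Quotient.mk _

lemma Psi_eq (n m : ℕ) (x : T n m)
    (p : {π : Setoid (Fin m) // Nat.card (Quotient π) = x.1.1 + 1})
    (hp : (enum m (x.1.1 + 1)).symm x.2.1 = p) :
    Psi n m x = x.2.2.1 ∘ finCongr p.2 ∘ qe m p.1 ∘ Quotient.mk p.1 := by
  subst hp; rfl

lemma ker_comp_inj {α β γ : Type*} (f : α → β) {g : β → γ} (hg : Function.Injective g) :
    Setoid.ker (g ∘ f) = Setoid.ker f :=
  Setoid.ext fun a b => by simp [Setoid.ker_def, Function.comp, hg.eq_iff]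

lemma ker_Psi (n m : ℕ) (x : T n m) :
    Setoid.ker (Psi n m x) = ((enum m (x.1.1 + 1)).symm x.2.1).1 := by
  set p := (enum m (x.1.1 + 1)).symm x.2.1 with hp
  rw [Psi_eq n m x p hp.symm]
  have h1 : (x.2.2.1 ∘ finCongr p.2 ∘ qe m p.1 ∘ Quotient.mk p.1)
      = (x.2.2.1 ∘ finCongr p.2 ∘ qe m p.1) ∘ (Quotient.mk p.1) := rfl
  rw [h1, ker_comp_inj]
  · exact Setoid.ker_mk_eq p.1
  · exact (x.2.2.2.comp (finCongr p.2).injective).comp (qe m p.1).injective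

lemma Psi_injective (n m : ℕ) : Function.Injective (Psi n m) := by
  rintro ⟨t₁, k₁, g₁⟩ ⟨t₂, k₂, g₂⟩ hPsi
  set p₁ := (enum m (t₁.1 + 1)).symm k₁ with hp₁
  set p₂ := (enum m (t₂.1 + 1)).symm k₂ with hp₂
  have hker : p₁.1 = p₂.1 := by
    have h1 := ker_Psi n m ⟨t₁, k₁, g₁⟩
    have h2 := ker_Psi n m ⟨t₂, k₂, g₂⟩
    rw [← h1, ← h2, hPsi]
  have ht : t₁ = t₂ := by
    have h1 := p₁.2
    have h2 := p₂.2
    have hc : Nat.card (Quotient p₁.1) = Nat.card (Quotient p₂.1) :=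
      congrArg (fun s => Nat.card (Quotient s)) hker
    apply Fin.ext
    omega
  subst ht
  have hpp : p₁ = p₂ := Subtype.ext hker
  have hk : k₁ = k₂ := by
    have := congrArg (enum m (t₁.1 + 1)) hpp
    simpa [hp₁, hp₂] using this
  subst hk
  have hg : g₁ = g₂ := by
    apply Subtype.ext
    funext j
    obtain ⟨q, hq⟩ := (qe m p₁.1).surjective ((finCongr p₁.2).symm j)
    obtain ⟨a, ha⟩ := Quotient.exists_rep q
    have e1 : Psi n m ⟨t₁, k₁, g₁⟩ a = g₁.1 j := by
      rw [Psi_eq n m ⟨t₁, k₁, g₁⟩ p₁ hp₁.symm]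
      simp [Function.comp, ha, hq]
    have e2 : Psi n m ⟨t₁, k₁, g₂⟩ a = g₂.1 j := by
      rw [Psi_eq n m ⟨t₁, k₁, g₂⟩ p₂ hp₂.symm, ← hpp]
      simp [Function.comp, ha, hq]
    rw [← e1, ← e2, hPsi]
  rw [hg]

lemma card_quot_ker_le (n m : ℕ) (I : Fin m → Fin n) :
    Nat.card (Quotient (Setoid.ker I)) ≤ n := by
  have h1 : Nat.card (Quotient (Setoid.ker I)) = Nat.card (Set.range I) :=
    Nat.card_congr (Setoid.quotientKerEquivRange I)
  have h2 : Nat.card (Set.range I) ≤ Nat.card (Fin n) :=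
    Nat.card_le_card_of_injective _ Subtype.val_injective
  simpa [h1] using h2

lemma Psi_surjective (n m : ℕ) (hm : 1 ≤ m) : Function.Surjective (Psi n m) := by
  intro I
  set π := Setoid.ker I with hπ
  have hle : Nat.card (Quotient π) ≤ n := card_quot_ker_le n m I
  have hpos : 1 ≤ Nat.card (Quotient π) := by
    have : Nonempty (Quotient π) := ⟨Quotient.mk π ⟨0, hm⟩⟩
    exact Nat.card_pos
  set t : Fin n := ⟨Nat.card (Quotient π) - 1, by omega⟩ with hT
  have hcard : Nat.card (Quotient π) = t.1 + 1 := by simp [hT]; omega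
  set L : Quotient π → Fin n := Quotient.lift I (fun a b hab => hab) with hL
  have hLmk : ∀ a, L (Quotient.mk π a) = I a := fun a => rfl
  have hLinj : Function.Injective L := by
    intro q₁ q₂ h
    obtain ⟨a, rfl⟩ := Quotient.exists_rep q₁
    obtain ⟨b, rfl⟩ := Quotient.exists_rep q₂
    exact Quotient.sound (by rw [hLmk, hLmk] at h; exact h)
  set g : Fin (t.1 + 1) → Fin n := L ∘ (qe m π).symm ∘ (finCongr hcard).symm with hg
  have hginj : Function.Injective g :=
    (hLinj.comp (qe m π).symm.injective).comp (finCongr hcard).symm.injective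
  refine ⟨⟨t, enum m (t.1 + 1) ⟨π, hcard⟩, ⟨g, hginj⟩⟩, ?_⟩
  rw [Psi_eq n m _ ⟨π, hcard⟩ (Equiv.symm_apply_apply _ _)]
  funext a
  simp [hg, Function.comp, hLmk]

theorem Psi_equivariant (n m : ℕ) (σ : Equiv.Perm (Fin n)) (x : T n m) :
    Psi n m ⟨x.1, x.2.1, ⟨⇑σ ∘ x.2.2.1, (Equiv.injective σ).comp x.2.2.2⟩⟩ =
      ⇑σ ∘ Psi n m x := rfl

/-- Submodule of functions supported on `S`. -/
def Z (n m : ℕ) (S : Set (Fin m → Fin n)) : Submodule ℂ ((Fin m → Fin n) → ℂ) where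
  carrier := {f | ∀ I, I ∉ S → f I = 0}
  add_mem' := fun ha hb I hI => by simp [ha I hI, hb I hI]
  zero_mem' := fun I _ => rfl
  smul_mem' := fun c f hf I hI => by simp [hf I hI]

lemma MPart_le_Z (n m : ℕ) (π : Setoid (Fin m)) :
    MPart n m π ≤ Z n m {I | Setoid.ker I = π} := by
  rw [MPart, Submodule.span_le]
  rintro f ⟨I, hI, rfl⟩ J hJ
  have : J ≠ I := fun h => hJ (h ▸ hI)
  exact Pi.single_eq_of_ne this 1

lemma Z_mono (n m : ℕ) {S S' : Set (Fin m → Fin n)} (h : S ⊆ S') : Z n m S ≤ Z n m S' :=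
  fun f hf I hI => hf I (fun hIS => hI (h hIS))

end MPartAux

open MPartAux in
/-- `M_n^{⊗m} = (Fin m → Fin n) → ℂ` is the internal direct sum, over
all set partitions `π` of `Fin m` with at most `n` blocks, of the subrepresentations
`M^π`; consequently, as a representation of `S_n`, it is isomorphic to the direct sum
over `t = 1, …, n` of `Stirling m t` copies of the permutation representation on
injective functions `Fin t → Fin n` (realised as functions on the corresponding sigma
type, with `S_n` acting on injections by post-composition). -/
theorem MPart_directSum (n m : ℕ) (hn : 1 ≤ n) (hm : 1 ≤ m) :
    (iSupIndep fun π : {π : Setoid (Fin m) // Nat.card (Quotient π) ≤ n} =>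
        MPart n m π.1) ∧
    (⨆ π : {π : Setoid (Fin m) // Nat.card (Quotient π) ≤ n}, MPart n m π.1 = ⊤) ∧
    ∃ e : ((Fin m → Fin n) → ℂ) ≃ₗ[ℂ]
        (((t : Fin n) × (Fin (Stirling m (t.1 + 1)) ×
          {g : Fin (t.1 + 1) → Fin n // Function.Injective g})) → ℂ),
      ∀ (σ : Equiv.Perm (Fin n)) (f : (Fin m → Fin n) → ℂ)
        (x : (t : Fin n) × (Fin (Stirling m (t.1 + 1)) ×
          {g : Fin (t.1 + 1) → Fin n // Function.Injective g})),
        e (fun I => f (⇑σ ∘ I)) x =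
          e f ⟨x.1, x.2.1, ⟨⇑σ ∘ x.2.2.1, (Equiv.injective σ).comp x.2.2.2⟩⟩ := by
  refine ⟨?_, ?_, ?_⟩
  · -- independence
    rw [iSupIndep_def]
    intro π
    rw [Submodule.disjoint_def]
    intro f hf hf'
    have h1 : f ∈ Z n m {I | Setoid.ker I = π.1} := MPart_le_Z n m π.1 hf
    have h2 : f ∈ Z n m {I | Setoid.ker I ≠ π.1} := by
      refine (iSup_le fun π' => iSup_le fun hne => ?_ : _ ≤ Z n m {I | Setoid.ker I ≠ π.1}) hf'
      refine (MPart_le_Z n m π'.1).trans (Z_mono n m ?_)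
      intro I hI hIπ
      exact hne (Subtype.ext (hI.symm.trans hIπ))
    funext I
    by_cases hI : Setoid.ker I = π.1
    · exact h2 I (by simp [hI])
    · exact h1 I hI
  · -- supremum is top
    rw [eq_top_iff, ← (Pi.basisFun ℂ (Fin m → Fin n)).span_eq, Submodule.span_le]
    rintro _ ⟨I, rfl⟩
    rw [Pi.basisFun_apply]
    exact Submodule.mem_iSup_of_mem ⟨Setoid.ker I, card_quot_ker_le n m I⟩
      (Submodule.subset_span ⟨I, rfl, rfl⟩)
  · -- the equivariant linear equivalence
    have hbij : Function.Bijective (Psi n m) :=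
      ⟨Psi_injective n m, Psi_surjective n m hm⟩
    refine ⟨LinearEquiv.funCongrLeft ℂ ℂ (Equiv.ofBijective (Psi n m) hbij), ?_⟩
    intro σ f x
    simp only [LinearEquiv.funCongrLeft_apply, LinearMap.funLeft_apply,
      Equiv.ofBijective_apply]
    exact (congrArg f (Psi_equivariant n m σ x)).symm

end
end

section
/- Let m ≥ 1 and, for each r ∈ {1, …, m}, let n_r ≥ 1 and k_r, l_r ≥ 0. The complex vector space of matrices f : (∏_r (Fin l_r → Fin n_r)) × (∏_r (Fin k_r → Fin n_r)) → ℂ satisfying f((σ_r ∘ I_r)_r, (σ_r ∘ J_r)_r) = f((I_r)_r, (J_r)_r) for all (σ_1, …, σ_m) ∈ S_{n_1} × ⋯ × S_{n_m} has dimension ∏_{r=1}^m Bell(l_r + k_r, n_r). -/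
noncomputable section

/-- The space
`Hom_{S_{n_1} × ⋯ × S_{n_m}}(M_{n_1}^{⊗k_1} ⊠ ⋯ ⊠ M_{n_m}^{⊗k_m}, M_{n_1}^{⊗l_1} ⊠ ⋯ ⊠ M_{n_m}^{⊗l_m})`
in the standard basis: matrices on products of tuple spaces, invariant under the
componentwise action of the product of symmetric groups by post-composition. -/
def MHomProd (m : ℕ) (n l k : Fin m → ℕ) :
    Submodule ℂ
      (((r : Fin m) → (Fin (l r) → Fin (n r))) ×
        ((r : Fin m) → (Fin (k r) → Fin (n r))) → ℂ) where
  carrier := {f | ∀ (σ : (r : Fin m) → Equiv.Perm (Fin (n r)))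
    (I : (r : Fin m) → (Fin (l r) → Fin (n r)))
    (J : (r : Fin m) → (Fin (k r) → Fin (n r))),
    f (fun r => ⇑(σ r) ∘ I r, fun r => ⇑(σ r) ∘ J r) = f (I, J)}
  add_mem' := by
    intro a b ha hb σ I J
    simp only [Pi.add_apply, ha σ I J, hb σ I J]
  zero_mem' := by intro σ I J; rfl
  smul_mem' := by
    intro c a ha σ I J
    simp only [Pi.smul_apply, ha σ I J]

open Function

noncomputable section

lemma exists_perm_comp {α β : Type*} [Fintype β] [DecidableEq β] {f g : α → β}
    (h : ∀ a b, f a = f b ↔ g a = g b) : ∃ σ : Equiv.Perm β, ⇑σ ∘ f = g := by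
  classical
  have hFinj : ∀ (y : Set.range f), ∃ a, f a = y := fun y => y.2
  let u : Set.range f → α := fun y => (hFinj y).choose
  have hu : ∀ y : Set.range f, f (u y) = y := fun y => (hFinj y).choose_spec
  let e₁ : Set.range f → Set.range g := fun y => ⟨g (u y), Set.mem_range_self _⟩
  have he₁ : Bijective e₁ := by
    constructor
    · intro y z hyz
      have : g (u y) = g (u z) := congrArg Subtype.val hyz
      have : f (u y) = f (u z) := (h _ _).2 this
      rw [hu, hu] at this
      exact Subtype.ext this
    · rintro ⟨_, a, rfl⟩
      refine ⟨⟨f a, Set.mem_range_self _⟩, ?_⟩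
      have : f (u ⟨f a, Set.mem_range_self _⟩) = f a := hu _
      exact Subtype.ext ((h _ _).1 this)
  let E₁ : Set.range f ≃ Set.range g := Equiv.ofBijective _ he₁
  have hcard : Fintype.card ((Set.range f)ᶜ : Set β) = Fintype.card ((Set.range g)ᶜ : Set β) := by
    have := Fintype.card_congr E₁
    simp only [Fintype.card_compl_set]
    omega
  let E₂ : ((Set.range f)ᶜ : Set β) ≃ ((Set.range g)ᶜ : Set β) := Fintype.equivOfCardEq hcard
  refine ⟨((Equiv.Set.sumCompl (Set.range f)).symm.trans ((E₁.sumCongr E₂).trans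
    (Equiv.Set.sumCompl (Set.range g)))), ?_⟩
  funext a
  simp only [comp_apply, Equiv.trans_apply]
  rw [Equiv.Set.sumCompl_symm_apply_of_mem (Set.mem_range_self a)]
  simp only [Equiv.sumCongr_apply, Sum.map_inl, Equiv.Set.sumCompl_apply_inl]
  show g (u ⟨f a, _⟩) = g a
  exact (h _ _).1 (hu _)

instance setoidFinite (α : Type*) [Finite α] : Finite (Setoid α) := by
  have : Function.Injective (fun s : Setoid α => s.r) := by
    intro s t h
    simp only at h
    exact Setoid.ext fun a b => iff_of_eq (congrFun (congrFun h a) b)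
  exact Finite.of_injective _ this

section Main

variable (m : ℕ) (n l k : Fin m → ℕ)

abbrev XX := (((r : Fin m) → (Fin (l r) → Fin (n r))) ×
        ((r : Fin m) → (Fin (k r) → Fin (n r))))

/-- the combined tuple -/
def FF (x : XX m n l k) (r : Fin m) : Fin (l r + k r) → Fin (n r) :=
  Fin.append (x.1 r) (x.2 r)

def RR : Setoid (XX m n l k) where
  r x y := ∃ σ : (r : Fin m) → Equiv.Perm (Fin (n r)),
    (fun r => ⇑(σ r) ∘ y.1 r, fun r => ⇑(σ r) ∘ y.2 r) = x
  iseqv := by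
    constructor
    · intro x; exact ⟨fun r => 1, rfl⟩
    · rintro x y ⟨σ, rfl⟩
      refine ⟨fun r => (σ r)⁻¹, ?_⟩
      ext r i <;> simp
    · rintro x y z ⟨σ, rfl⟩ ⟨τ, rfl⟩
      refine ⟨fun r => σ r * τ r, ?_⟩
      ext r i <;> simp
  
lemma key (x y : XX m n l k)
    (h : ∀ r a b, FF m n l k x r a = FF m n l k x r b ↔ FF m n l k y r a = FF m n l k y r b) :
    (RR m n l k).r y x := by
  choose σ hσ using fun r => exists_perm_comp (h r)
  refine ⟨σ, ?_⟩
  have h1 : ∀ r, ⇑(σ r) ∘ x.1 r = y.1 r := by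
    intro r; funext i
    have := congrFun (hσ r) (Fin.castAdd (k r) i)
    simpa [FF, Fin.append_left] using this
  have h2 : ∀ r, ⇑(σ r) ∘ x.2 r = y.2 r := by
    intro r; funext i
    have := congrFun (hσ r) (Fin.natAdd (l r) i)
    simpa [FF, Fin.append_right] using this
  exact Prod.ext (funext h1) (funext h2)

end Main

end

noncomputable section Main2

variable (m : ℕ) (n l k : Fin m → ℕ)

lemma card_ker_le {t N : ℕ} (f : Fin t → Fin N) :
    Nat.card (Quotient (Setoid.ker f)) ≤ N := by
  have e := Setoid.quotientKerEquivRange f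
  rw [Nat.card_congr e]
  calc Nat.card (Set.range f) ≤ Nat.card (Fin N) :=
        Nat.card_le_card_of_injective _ Subtype.val_injective
    _ = N := by simp
  
def PP (x : XX m n l k) : (r : Fin m) →
    {π : Setoid (Fin (l r + k r)) // Nat.card (Quotient π) ≤ n r} :=
  fun r => ⟨Setoid.ker (FF m n l k x r), card_ker_le _⟩

lemma PP_sound (x y : XX m n l k) (h : (RR m n l k).r x y) :
    PP m n l k x = PP m n l k y := by
  obtain ⟨σ, rfl⟩ := h
  funext r
  apply Subtype.ext
  apply Setoid.ext
  intro a b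
  show FF m n l k _ r a = FF m n l k _ r b ↔ FF m n l k y r a = FF m n l k y r b
  have hF : ∀ c, FF m n l k (fun r => ⇑(σ r) ∘ y.1 r, fun r => ⇑(σ r) ∘ y.2 r) r c
      = σ r (FF m n l k y r c) := by
    intro c
    induction c using Fin.addCases with
    | left i => simp [FF, Fin.append_left]
    | right i => simp [FF, Fin.append_right]
  rw [hF, hF]
  exact ⟨fun hh => (σ r).injective hh, fun hh => congrArg _ hh⟩

def QE : Quotient (RR m n l k) ≃
    ((r : Fin m) → {π : Setoid (Fin (l r + k r)) // Nat.card (Quotient π) ≤ n r}) := by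
  refine Equiv.ofBijective (Quotient.lift (PP m n l k) (PP_sound m n l k)) ⟨?_, ?_⟩
  · intro q q'
    induction q using Quotient.ind
    induction q' using Quotient.ind
    rename_i x y
    intro hxy
    simp only [Quotient.lift_mk] at hxy
    apply Quotient.sound
    exact Setoid.symm' _ (key m n l k x y (by
      intro r a b
      have h2 := congrArg (fun p => (p r).1) hxy
      exact iff_of_eq (congrFun (congrFun (congrArg (fun s : Setoid _ => s.r) h2) a) b)))
  · intro π
    classical
    have hemb : ∀ r : Fin m, ∃ ι : Quotient (π r).1 ↪ Fin (n r), True := by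
      intro r
      have : Fintype (Quotient (π r).1) := Fintype.ofFinite _
      have hc : Fintype.card (Quotient (π r).1) ≤ Fintype.card (Fin (n r)) := by
        rw [Fintype.card_fin, ← Nat.card_eq_fintype_card]
        exact (π r).2
      exact ⟨(Function.Embedding.nonempty_of_card_le hc).some, trivial⟩
    choose ι _ using hemb
    set fr : (r : Fin m) → Fin (l r + k r) → Fin (n r) :=
      fun r a => ι r (@Quotient.mk _ (π r).1 a) with hfr
    set x : XX m n l k :=
      (fun r i => fr r (Fin.castAdd (k r) i), fun r j => fr r (Fin.natAdd (l r) j)) with hx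
    have hFF : ∀ r, FF m n l k x r = fr r := by
      intro r
      funext a
      induction a using Fin.addCases with
      | left i => simp [FF, hx, Fin.append_left]
      | right i => simp [FF, hx, Fin.append_right]
    refine ⟨⟦x⟧, ?_⟩
    simp only [Quotient.lift_mk]
    funext r
    apply Subtype.ext
    show Setoid.ker (FF m n l k x r) = (π r).1
    rw [hFF]
    apply Setoid.ext
    intro a b
    show ι r _ = ι r _ ↔ _
    rw [(ι r).injective.eq_iff]
    exact Quotient.eq''

def LinEq : ↥(MHomProd m n l k) ≃ₗ[ℂ] (Quotient (RR m n l k) → ℂ) where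
  toFun f := fun q => f.1 q.out
  map_add' f g := rfl
  map_smul' c f := rfl
  invFun g := ⟨fun x => g ⟦x⟧, by
    intro σ I J
    apply congrArg
    exact Quotient.sound ⟨σ, rfl⟩⟩
  left_inv f := by
    apply Subtype.ext
    funext x
    obtain ⟨σ, hσ⟩ := Quotient.mk_out (s := RR m n l k) x
    have := f.2 σ x.1 x.2
    simp only at this ⊢
    rw [← hσ]
    exact this
  right_inv g := by
    funext q
    simp only
    rw [Quotient.out_eq]

end Main2


/-- the above space of `S_{n_1} × ⋯ × S_{n_m}`-equivariant matrices has
dimension `∏_{r} Bell (l_r + k_r, n_r)`. -/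
theorem finrank_MHomProd (m : ℕ) (hm : 1 ≤ m) (n l k : Fin m → ℕ)
    (hn : ∀ r, 1 ≤ n r) :
    Module.finrank ℂ ↥(MHomProd m n l k) =
      ∏ r : Fin m, Bell (l r + k r) (n r) := by
  rw [LinearEquiv.finrank_eq (LinEq m n l k)]
  have : Fintype (Quotient (RR m n l k)) := Fintype.ofFinite _
  rw [Module.finrank_pi, ← Nat.card_eq_fintype_card, Nat.card_congr (QE m n l k),
    Nat.card_pi]
  rfl


end
end
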